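/- arXiv:1107.2016 — 2 statements merged into one kernel-verified Lean document; each statement's English description precedes it below -/
import Mathlib

section
/- Let h: ℝ^d → [0,∞) be integrable with ∫_0^n ∫_{ℝ^d ∖ [-r,r]^d} h(x) dx dr = o(n) as n → ∞. Then (1/(r_n n^d)) ∫_{[-n,n]^d} ∫_{ℝ^d ∖ [-n,n]^d} h(x-y) dx dy ≤ 2d (2n)^{d-1}/(r_n n^d) · ∫_0^n ∫_{ℝ^d∖[-r,r]^d} h(y) dy dr, where r_n = √(q_n) with q_n = n^{-1}(1 + ∫_0^n ∫_{ℝ^d∖[-r,r]^d} h dx dr); in particular the left-hand side tends to 0 as n → ∞. -/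
/-!
Write `G s` for the integral of `h` outside the cube `[-s,s]^d`. If `y ∈ [-n,n]^d` and
`x ∉ [-n,n]^d`, then `x - y` lies outside the cube of radius `n - max_i |y_i|`, so the inner
integral is at most `∑_i G (n - |y_i|)`. A function of the single coordinate `y_i` integrates over
`[-n,n]^d` to `(2n)^(d-1)` times its integral over `[-n,n]`, and `∫_{-n}^n G (n - |t|) dt` equals
`2 ∫_0^n G`. For the limit, `r_n ≥ √(I_n / n)` turns the bound into `2^d d √(I_n / n) → 0`.
-/

open MeasureTheory Set Filter

theorem integral_comp_eval_pi {ι : Type*} [Fintype ι] [DecidableEq ι] {X : ι → Type*}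
    [∀ i, MeasurableSpace (X i)] (μ : ∀ i, Measure (X i)) [∀ i, SigmaFinite (μ i)]
    {E : Type*} [NormedAddCommGroup E] [NormedSpace ℝ E] {i : ι} {f : X i → E}
    (hf : AEStronglyMeasurable f (μ i)) :
    ∫ x, f (x i) ∂Measure.pi μ = (∏ j ∈ Finset.univ.erase i, μ j univ).toReal • ∫ t, f t ∂μ i := by
  rw [← integral_map (measurable_pi_apply i).aemeasurable, Measure.pi_map_eval,
    integral_smul_measure]
  simpa only [Measure.pi_map_eval] using hf.smul_measure _

theorem setIntegral_Icc_comp_sub_abs (g : ℝ → ℝ) {a : ℝ} (ha : 0 ≤ a) :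
    ∫ t in Icc (-a) a, g (a - |t|) = 2 * ∫ t in Ioc 0 a, g t := by
  have hind : (Icc (-a) a).indicator (fun t => g (a - |t|))
      = fun t => (Iic a).indicator (fun s => g (a - s)) |t| := by
    ext t
    simp only [indicator, mem_Icc, mem_Iic, ← abs_le]
  rw [← integral_indicator measurableSet_Icc, hind, integral_comp_abs,
    setIntegral_indicator measurableSet_Iic, Ioi_inter_Iic,
    ← intervalIntegral.integral_of_le ha, ← intervalIntegral.integral_of_le ha,
    intervalIntegral.integral_comp_sub_left]
  simp

section Cube

variable {ι : Type*}

variable (ι) in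
def cube (a : ℝ) : Set (EuclideanSpace ℝ ι) := {y | ∀ i, |y i| ≤ a}

theorem cube_eq_preimage_pi (a : ℝ) :
    cube ι a = (MeasurableEquiv.toLp 2 (ι → ℝ)).symm ⁻¹' univ.pi fun _ => Icc (-a) a := by
  ext y
  simp only [cube, mem_preimage, mem_univ_pi, mem_Icc, abs_le]
  rfl

variable (ι) in
def outsideCube (s : ℝ) : Set (EuclideanSpace ℝ ι) := {x | ∃ i, s < |x i|}

theorem preimage_add_outsideCube_subset {y : EuclideanSpace ℝ ι} {i₀ : ι}
    (hi₀ : ∀ i, |y i| ≤ |y i₀|) (s : ℝ) :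
    (· + y) ⁻¹' outsideCube ι s ⊆ outsideCube ι (s - |y i₀|) := by
  rintro z ⟨i, hi⟩
  refine ⟨i, ?_⟩
  change s < |z i + y i| at hi
  linarith [abs_add_le (z i) (y i), hi₀ i]

variable [Fintype ι]

theorem integrableOn_cube_comp_apply {f : ℝ → ℝ} {a : ℝ} (hf : IntegrableOn f (Icc (-a) a))
    (i : ι) : IntegrableOn (fun y : EuclideanSpace ℝ ι => f (y i)) (cube ι a) := by
  rw [cube_eq_preimage_pi]
  refine (EuclideanSpace.volume_preserving_symm_measurableEquiv_toLp ι).integrableOn_comp_preimage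
    (MeasurableEquiv.measurableEmbedding _) (f := fun v => f (v i)) |>.2 ?_
  rw [IntegrableOn, volume_pi, Measure.restrict_pi_pi]
  exact integrable_comp_eval hf

theorem setIntegral_cube_comp_apply {f : ℝ → ℝ} {a : ℝ}
    (hf : AEStronglyMeasurable f (volume.restrict (Icc (-a) a))) (ha : 0 ≤ a) (i : ι) :
    ∫ y in cube ι a, f (y i) = (2 * a) ^ (Fintype.card ι - 1) * ∫ t in Icc (-a) a, f t := by
  classical
  rw [cube_eq_preimage_pi]
  refine ((EuclideanSpace.volume_preserving_symm_measurableEquiv_toLp ι).setIntegral_preimage_emb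
    (MeasurableEquiv.measurableEmbedding _) (fun v => f (v i)) _).trans ?_
  rw [volume_pi, Measure.restrict_pi_pi, integral_comp_eval_pi _ hf]
  simp [Real.volume_Icc, Finset.card_erase_of_mem, ENNReal.toReal_ofReal (by linarith : 0 ≤ a + a),
    two_mul]

noncomputable def cubeTail (h : EuclideanSpace ℝ ι → ℝ) (s : ℝ) : ℝ :=
  ∫ x in outsideCube ι s, h x

variable {h : EuclideanSpace ℝ ι → ℝ}

theorem cubeTail_nonneg (hnn : ∀ x, 0 ≤ h x) (s : ℝ) : 0 ≤ cubeTail h s :=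
  integral_nonneg fun x => hnn x

theorem cubeTail_le_integral (hnn : ∀ x, 0 ≤ h x) (hint : Integrable h) (s : ℝ) :
    cubeTail h s ≤ ∫ x, h x :=
  setIntegral_le_integral hint (ae_of_all _ hnn)

theorem antitone_cubeTail (hnn : ∀ x, 0 ≤ h x) (hint : Integrable h) : Antitone (cubeTail h) :=
  fun _ _ hst => setIntegral_mono_set hint.integrableOn (ae_of_all _ hnn)
    (Eventually.of_forall fun _ ⟨i, hi⟩ => ⟨i, hst.trans_lt hi⟩)

theorem setIntegral_outsideCube_sub_le (hnn : ∀ x, 0 ≤ h x) (hint : Integrable h) (s : ℝ)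
    (y : EuclideanSpace ℝ ι) :
    ∫ x in outsideCube ι s, h (x - y) ≤ ∑ i, cubeTail h (s - |y i|) := by
  rcases isEmpty_or_nonempty ι with hι | hι
  · simp [outsideCube]
  obtain ⟨i₀, -, hi₀⟩ := Finset.exists_max_image Finset.univ (fun i => |y i|) Finset.univ_nonempty
  calc ∫ x in outsideCube ι s, h (x - y)
      = ∫ z in (· + y) ⁻¹' outsideCube ι s, h z := by
        rw [← (measurePreserving_add_right volume y).setIntegral_preimage_emb
          (MeasurableEquiv.addRight y).measurableEmbedding]
        simp
    _ ≤ cubeTail h (s - |y i₀|) :=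
        setIntegral_mono_set hint.integrableOn (ae_of_all _ hnn)
          (preimage_add_outsideCube_subset (fun i => hi₀ i (Finset.mem_univ i)) s).eventuallyLE
    _ ≤ ∑ i, cubeTail h (s - |y i|) :=
        Finset.single_le_sum (f := fun i => cubeTail h (s - |y i|))
          (fun i _ => cubeTail_nonneg hnn _) (Finset.mem_univ i₀)

theorem integral_cube_integral_outsideCube_sub_le (hnn : ∀ x, 0 ≤ h x) (hint : Integrable h)
    {a : ℝ} (ha : 0 ≤ a) :
    ∫ y in cube ι a, ∫ x in outsideCube ι a, h (x - y)
      ≤ 2 * Fintype.card ι * (2 * a) ^ (Fintype.card ι - 1) * ∫ t in Ioc 0 a, cubeTail h t := by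
  have hmeas : Measurable fun t => cubeTail h (a - |t|) :=
    (antitone_cubeTail hnn hint).measurable.comp (measurable_const.sub measurable_abs)
  have hIcc : IntegrableOn (fun t => cubeTail h (a - |t|)) (Icc (-a) a) :=
    Integrable.of_bound hmeas.aestronglyMeasurable (∫ x, h x) <| ae_of_all _ fun t => by
      rw [Real.norm_of_nonneg (cubeTail_nonneg hnn _)]
      exact cubeTail_le_integral hnn hint _
  have hcube (i : ι) : IntegrableOn (fun y => cubeTail h (a - |y i|)) (cube ι a) :=
    integrableOn_cube_comp_apply hIcc i
  calc ∫ y in cube ι a, ∫ x in outsideCube ι a, h (x - y)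
      ≤ ∫ y in cube ι a, ∑ i, cubeTail h (a - |y i|) :=
        integral_mono_of_nonneg (ae_of_all _ fun _ => integral_nonneg fun _ => hnn _)
          (integrable_finsetSum _ fun i _ => hcube i)
          (ae_of_all _ fun y => setIntegral_outsideCube_sub_le hnn hint a y)
    _ = ∑ _i : ι, (2 * a) ^ (Fintype.card ι - 1) * (2 * ∫ t in Ioc 0 a, cubeTail h t) := by
        rw [integral_finsetSum _ fun i _ => hcube i]
        refine Finset.sum_congr rfl fun i _ => ?_
        rw [setIntegral_cube_comp_apply hIcc.aestronglyMeasurable ha,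
          setIntegral_Icc_comp_sub_abs _ ha]
    _ = _ := by
        rw [Finset.sum_const, Finset.card_univ, nsmul_eq_mul]
        ring

end Cube

theorem div_mul_le_sqrt_div {I n r : ℝ} (hI : 0 ≤ I) (hn : 0 < n) (hr : √(I / n) ≤ r) :
    I / (n * r) ≤ √(I / n) := by
  rcases hI.eq_or_lt with rfl | hIpos
  · simp
  have hs : 0 < √(I / n) := Real.sqrt_pos.2 (div_pos hIpos hn)
  calc I / (n * r) ≤ I / (n * √(I / n)) := by gcongr
    _ = √(I / n) ^ 2 / √(I / n) := by
        rw [Real.sq_sqrt (div_nonneg hI hn.le)]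
        field_simp
    _ = √(I / n) := by field_simp

theorem natCast_mul_pow_pred_mul (d : ℕ) (x : ℝ) : (d : ℝ) * x ^ (d - 1) * x = d * x ^ d := by
  cases d with
  | zero => simp
  | succ k => simp [pow_succ, mul_assoc]

theorem stmt_4_general (d : ℕ) (h : EuclideanSpace ℝ (Fin d) → ℝ)
    (hnn : ∀ x, 0 ≤ h x) (hint : Integrable h)
    (I : ℕ → ℝ)
    (hI : ∀ n : ℕ, I n = ∫ r in Ioc (0:ℝ) (n:ℝ),
        (∫ x in {x : EuclideanSpace ℝ (Fin d) | ∃ i, r < |x i|}, h x))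
    (hsmall : Tendsto (fun n : ℕ => I n / n) atTop (nhds 0))
    (q r : ℕ → ℝ)
    (hq : ∀ n : ℕ, q n = (1 + I n) / n)
    (hr : ∀ n, r n = Real.sqrt (q n))
    (LHS : ℕ → ℝ)
    (hLHS : ∀ n : ℕ, LHS n = (1 / (r n * (n:ℝ) ^ d)) *
        ∫ y in {y : EuclideanSpace ℝ (Fin d) | ∀ i, |y i| ≤ (n:ℝ)},
          (∫ x in {x : EuclideanSpace ℝ (Fin d) | ∃ i, (n:ℝ) < |x i|}, h (x - y))) :
    (∀ n : ℕ, 1 ≤ n →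
        LHS n ≤ (2 * d * (2 * (n:ℝ)) ^ (d - 1) / (r n * (n:ℝ) ^ d)) * I n) ∧
      Tendsto LHS atTop (nhds 0) := by
  have hI_tail (n : ℕ) : I n = ∫ t in Ioc 0 (n : ℝ), cubeTail h t := hI n
  have hI_nonneg (n : ℕ) : 0 ≤ I n := by
    rw [hI_tail]
    exact integral_nonneg fun t => cubeTail_nonneg hnn t
  have hr_nonneg (n : ℕ) : 0 ≤ r n := hr n ▸ Real.sqrt_nonneg _
  have hbound (n : ℕ) : LHS n ≤ (2 * d * (2 * (n:ℝ)) ^ (d - 1) / (r n * (n:ℝ) ^ d)) * I n := by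
    have key := integral_cube_integral_outsideCube_sub_le hnn hint (n.cast_nonneg (α := ℝ))
    rw [Fintype.card_fin, ← hI_tail] at key
    rw [hLHS, one_div_mul_eq_div, div_mul_eq_mul_div]
    exact div_le_div_of_nonneg_right key (mul_nonneg (hr_nonneg n) (by positivity))
  have hbound_sqrt (n : ℕ) (hn : 1 ≤ n) :
      (2 * d * (2 * (n:ℝ)) ^ (d - 1) / (r n * (n:ℝ) ^ d)) * I n ≤ 2 ^ d * d * √(I n / n) := by
    have hn0 : (0 : ℝ) < n := by exact_mod_cast hn
    have hr_pos : 0 < r n := by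
      rw [hr, hq]
      exact Real.sqrt_pos.2 (div_pos (by linarith [hI_nonneg n]) hn0)
    have hsqrt_le : √(I n / n) ≤ r n := by
      rw [hr, hq]
      gcongr
      linarith
    calc (2 * d * (2 * (n:ℝ)) ^ (d - 1) / (r n * (n:ℝ) ^ d)) * I n
        = 2 ^ d * d * (I n / (n * r n)) := by
          have := natCast_mul_pow_pred_mul d (2 * n)
          field_simp
          simp only [mul_pow] at this
          linear_combination I n * this
      _ ≤ 2 ^ d * d * √(I n / n) := by
          gcongr
          exact div_mul_le_sqrt_div (hI_nonneg n) hn0 hsqrt_le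
  refine ⟨fun n _ => hbound n, ?_⟩
  have hsqrt_lim : Tendsto (fun n : ℕ => 2 ^ d * d * √(I n / n)) atTop (nhds 0) := by
    simpa using (hsmall.sqrt).const_mul ((2 : ℝ) ^ d * d)
  refine squeeze_zero' (Eventually.of_forall fun n => ?_)
    (eventually_atTop.2 ⟨1, fun n hn => (hbound n).trans (hbound_sqrt n hn)⟩) hsqrt_lim
  rw [hLHS]
  exact mul_nonneg (one_div_nonneg.2 (mul_nonneg (hr_nonneg n) (by positivity)))
    (integral_nonneg fun y => integral_nonneg fun x => hnn _)

/-- For integrable nonnegative `h : ℝ^d → ℝ` with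
`∫_0^n ∫_{ℝ^d ∖ [-r,r]^d} h dx dr = o(n)`, setting `q_n = n⁻¹(1 + I n)` and `r_n = √(q_n)`,
the quantity `(r_n n^d)⁻¹ ∫_{[-n,n]^d} ∫_{ℝ^d∖[-n,n]^d} h(x-y) dx dy` is bounded by
`2d (2n)^{d-1} (r_n n^d)⁻¹ I n` and tends to `0`. -/
theorem stmt_4 (d : ℕ) (hd : 0 < d) (h : EuclideanSpace ℝ (Fin d) → ℝ)
    (hmeas : Measurable h) (hnn : ∀ x, 0 ≤ h x) (hint : Integrable h)
    (I : ℕ → ℝ)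
    (hI : ∀ n : ℕ, I n = ∫ r in Ioc (0:ℝ) (n:ℝ),
        (∫ x in {x : EuclideanSpace ℝ (Fin d) | ∃ i, r < |x i|}, h x))
    (hsmall : Tendsto (fun n : ℕ => I n / n) atTop (nhds 0))
    (q r : ℕ → ℝ)
    (hq : ∀ n : ℕ, q n = (1 + I n) / n)
    (hr : ∀ n, r n = Real.sqrt (q n))
    (LHS : ℕ → ℝ)
    (hLHS : ∀ n : ℕ, LHS n = (1 / (r n * (n:ℝ) ^ d)) *
        ∫ y in {y : EuclideanSpace ℝ (Fin d) | ∀ i, |y i| ≤ (n:ℝ)},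
          (∫ x in {x : EuclideanSpace ℝ (Fin d) | ∃ i, (n:ℝ) < |x i|}, h (x - y))) :
    (∀ n : ℕ, 1 ≤ n →
        LHS n ≤ (2 * d * (2 * (n:ℝ)) ^ (d - 1) / (r n * (n:ℝ) ^ d)) * I n) ∧
      Tendsto LHS atTop (nhds 0) :=
  stmt_4_general d h hnn hint I hI hsmall q r hq hr LHS hLHS
end

section
/- Let H be a complex Hilbert space, A a self-adjoint nonpositive operator that is essentially self-adjoint on a core D₀, and B a densely defined operator on D₀ that is antisymmetric (⟨BF,G⟩ = -⟨F,BG⟩ on D₀) and Kato-bounded by A with relative bound 0 (for every ε > 0 there is C_ε with ‖BF‖ ≤ ε‖AF‖ + C_ε‖F‖ for all F ∈ D₀). Then A + B is essentially m-dissipative on D₀. -/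
/-!
If `‖P x‖ ≤ θ ‖T x‖` with `θ < 1` and `T` has dense range, then so does `T - P`: otherwise Riesz's
lemma yields a vector at distance nearly its norm from the range of `T - P`, whereas `T x - P x`
approximates it up to about `θ` times its norm.

For a dissipative `L`, both `μ ‖x‖` and `‖L x‖` are bounded by `‖μ x - L x‖`. The first bound lets
density of the range of `μ - L` pass from `μ` to every `ν ∈ (0, 2μ)`, hence to every `ν > 0`;
together they make a perturbation `B` of relative bound `a < 1` small compared with `μ - L` once
`μ` is large. So density for `1 - A` gives density for `μ - A` with `μ` large, then for
`μ - (A + B)`, and, `A + B` being dissipative by antisymmetry of `B`, finally for `1 - (A + B)`.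
-/

open RCLike

theorem LinearMap.denseRange_sub_of_norm_le_mul {𝕜 E F : Type*} [NormedField 𝕜] [AddCommGroup E]
    [Module 𝕜 E] [NormedAddCommGroup F] [NormedSpace 𝕜 F] {T P : E →ₗ[𝕜] F} {θ : ℝ}
    (hθ : θ < 1) (hP : ∀ x, ‖P x‖ ≤ θ * ‖T x‖) (hT : DenseRange T) : DenseRange (T - P) := by
  wlog hθ₀ : 0 ≤ θ generalizing θ
  · exact this (max_lt hθ one_pos)
      (fun x => (hP x).trans (by gcongr; exact le_max_left _ _)) (le_max_right _ _)
  set R := LinearMap.range (T - P)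
  rw [DenseRange, ← LinearMap.coe_range, Submodule.dense_iff_topologicalClosure_eq_top]
  by_contra hS
  obtain ⟨x₀, hx₀S, hx₀⟩ := riesz_lemma R.isClosed_topologicalClosure
    (SetLike.exists_not_mem_of_ne_top _ hS) (r := (1 + θ) / 2) (by linarith)
  have hx₀pos : 0 < ‖x₀‖ := norm_pos_iff.mpr fun h => hx₀S (h ▸ R.topologicalClosure.zero_mem)
  -- chosen so that `δ (1 + θ) < (1 - θ) ‖x₀‖ / 2`, which contradicts Riesz's bound below
  set δ := (1 - θ) * ‖x₀‖ / 4 with hδ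
  obtain ⟨x, hx⟩ := Metric.denseRange_iff.mp hT x₀ δ (by positivity)
  rw [dist_eq_norm] at hx
  have hTx : ‖T x‖ ≤ ‖x₀‖ + δ := by
    linarith [norm_sub_norm_le (T x) x₀, norm_sub_rev x₀ (T x)]
  have hmem : (T - P) x ∈ R.topologicalClosure :=
    R.le_topologicalClosure (LinearMap.mem_range_self _ x)
  have key : (1 + θ) / 2 * ‖x₀‖ ≤ δ + θ * (‖x₀‖ + δ) :=
    calc (1 + θ) / 2 * ‖x₀‖ ≤ ‖x₀ - (T - P) x‖ := hx₀ _ hmem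
      _ = ‖(x₀ - T x) + P x‖ := by
        rw [LinearMap.sub_apply, sub_sub_eq_add_sub, add_sub_right_comm]
      _ ≤ ‖x₀ - T x‖ + ‖P x‖ := norm_add_le _ _
      _ ≤ δ + θ * (‖x₀‖ + δ) := add_le_add hx.le ((hP x).trans (by gcongr))
  nlinarith [mul_pos (mul_pos (sub_pos.2 hθ) (sub_pos.2 hθ)) hx₀pos]

section Dissipative

variable {𝕜 H : Type*} [RCLike 𝕜] [NormedAddCommGroup H] [InnerProductSpace 𝕜 H]

theorem sq_mul_norm_add_sq_norm_le_sq_norm_smul_sub {x y : H} (h : re (inner 𝕜 y x) ≤ 0)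
    {μ : ℝ} (hμ : 0 ≤ μ) : (μ * ‖x‖) ^ 2 + ‖y‖ ^ 2 ≤ ‖(μ : 𝕜) • x - y‖ ^ 2 := by
  have hre : re (inner 𝕜 ((μ : 𝕜) • x) y) = μ * re (inner 𝕜 y x) := by
    rw [inner_smul_left, conj_ofReal, re_ofReal_mul, inner_re_symm (𝕜 := 𝕜)]
  rw [norm_sub_sq (𝕜 := 𝕜), hre, norm_smul, norm_ofReal, abs_of_nonneg hμ]
  nlinarith

variable {D : Submodule 𝕜 H}

def LinearMap.IsDissipative (L : D →ₗ[𝕜] H) : Prop :=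
  ∀ x : D, re (inner 𝕜 (L x) (x : H)) ≤ 0

namespace LinearMap.IsDissipative

variable {L : D →ₗ[𝕜] H} {μ : ℝ}

theorem mul_norm_le (hL : L.IsDissipative) (hμ : 0 ≤ μ) (x : D) :
    μ * ‖(x : H)‖ ≤ ‖((μ : 𝕜) • D.subtype - L) x‖ :=
  le_of_sq_le_sq (by
    have := sq_mul_norm_add_sq_norm_le_sq_norm_smul_sub (hL x) hμ
    simp only [LinearMap.sub_apply, LinearMap.smul_apply, Submodule.subtype_apply]
    linarith [sq_nonneg ‖L x‖]) (norm_nonneg _)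

theorem norm_le (hL : L.IsDissipative) (hμ : 0 ≤ μ) (x : D) :
    ‖L x‖ ≤ ‖((μ : 𝕜) • D.subtype - L) x‖ :=
  le_of_sq_le_sq (by
    have := sq_mul_norm_add_sq_norm_le_sq_norm_smul_sub (hL x) hμ
    simp only [LinearMap.sub_apply, LinearMap.smul_apply, Submodule.subtype_apply]
    linarith [sq_nonneg (μ * ‖(x : H)‖)]) (norm_nonneg _)

theorem denseRange_of_lt_two_mul (hL : L.IsDissipative) {ν : ℝ} (hμ : 0 < μ) (hν : 0 < ν)
    (hνμ : ν < 2 * μ) (h : DenseRange ((μ : 𝕜) • D.subtype - L)) :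
    DenseRange ((ν : 𝕜) • D.subtype - L) := by
  have hθ : |μ - ν| / μ < 1 := by
    rw [div_lt_one hμ, abs_sub_lt_iff]; constructor <;> linarith
  have hP : ∀ x : D, ‖((μ - ν : ℝ) : 𝕜) • (x : H)‖
      ≤ |μ - ν| / μ * ‖((μ : 𝕜) • D.subtype - L) x‖ := fun x => by
    rw [norm_smul, norm_ofReal, div_mul_eq_mul_div, le_div_iff₀ hμ, mul_assoc]
    exact mul_le_mul_of_nonneg_left ((mul_comm _ μ).trans_le (hL.mul_norm_le hμ.le x))
      (abs_nonneg _)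
  convert LinearMap.denseRange_sub_of_norm_le_mul (P := ((μ - ν : ℝ) : 𝕜) • D.subtype) hθ hP h
    using 2
  ext x
  simp [sub_smul]

theorem denseRange_of_denseRange (hL : L.IsDissipative) {ν : ℝ} (hμ : 0 < μ) (hν : 0 < ν)
    (h : DenseRange ((μ : 𝕜) • D.subtype - L)) : DenseRange ((ν : 𝕜) • D.subtype - L) := by
  have hpow : ∀ n : ℕ, DenseRange ((((3 / 2) ^ n * μ : ℝ) : 𝕜) • D.subtype - L) := by
    intro n
    induction n with
    | zero => simpa using h
    | succ n ih =>
      have hpos : 0 < (3 / 2 : ℝ) ^ n * μ := by positivity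
      exact hL.denseRange_of_lt_two_mul hpos (by positivity) (by rw [pow_succ]; linarith) ih
  obtain ⟨n, hn⟩ := pow_unbounded_of_one_lt (ν / μ) (by norm_num : (1 : ℝ) < 3 / 2)
  have hpos : 0 < (3 / 2 : ℝ) ^ n * μ := by positivity
  refine hL.denseRange_of_lt_two_mul hpos hν ?_ (hpow n)
  rw [div_lt_iff₀ hμ] at hn
  linarith

theorem add_of_skew (hL : L.IsDissipative) {B : D →ₗ[𝕜] H}
    (hB : ∀ x y : D, inner 𝕜 (B x) (y : H) = -inner 𝕜 (x : H) (B y)) :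
    (L + B).IsDissipative := fun x => by
  have hBx : re (inner 𝕜 (B x) (x : H)) = 0 := by
    have := congrArg re (hB x x)
    rw [map_neg, inner_re_symm (𝕜 := 𝕜) (x : H)] at this
    linarith
  rw [LinearMap.add_apply, inner_add_left, map_add, hBx, add_zero]
  exact hL x

theorem denseRange_add_of_norm_le (hL : L.IsDissipative) {B : D →ₗ[𝕜] H} {a b : ℝ}
    (ha : 0 ≤ a) (hb : 0 ≤ b) (hμ : 0 < μ) (habμ : a + b / μ < 1)
    (hB : ∀ x, ‖B x‖ ≤ a * ‖L x‖ + b * ‖(x : H)‖)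
    (h : DenseRange ((μ : 𝕜) • D.subtype - L)) : DenseRange ((μ : 𝕜) • D.subtype - (L + B)) := by
  have hP : ∀ x, ‖B x‖ ≤ (a + b / μ) * ‖((μ : 𝕜) • D.subtype - L) x‖ := fun x =>
    calc ‖B x‖ ≤ a * ‖L x‖ + b / μ * (μ * ‖(x : H)‖) := by
          rw [← mul_assoc, div_mul_cancel₀ b hμ.ne']
          exact hB x
      _ ≤ a * ‖((μ : 𝕜) • D.subtype - L) x‖ + b / μ * ‖((μ : 𝕜) • D.subtype - L) x‖ := by
          gcongr
          exacts [hL.norm_le hμ.le x, hL.mul_norm_le hμ.le x]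
      _ = _ := by ring
  rw [← sub_sub]
  exact LinearMap.denseRange_sub_of_norm_le_mul habμ hP h

end LinearMap.IsDissipative

end Dissipative

theorem stmt_7_general {H : Type*} [NormedAddCommGroup H] [InnerProductSpace ℂ H]
    (D₀ : Submodule ℂ H)
    (A B : D₀ →ₗ[ℂ] H)
    (hnonpos : ∀ F : D₀, (inner ℂ (A F) (F : H) : ℂ).re ≤ 0)
    (hesa : Dense (Set.range fun F : D₀ => (F : H) - A F))
    (hanti : ∀ F G : D₀, (inner ℂ (B F) (G : H) : ℂ) = -inner ℂ (F : H) (B G))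
    (hkato : ∀ ε : ℝ, 0 < ε → ∃ Cε : ℝ, ∀ F : D₀, ‖B F‖ ≤ ε * ‖A F‖ + Cε * ‖(F : H)‖) :
    (∀ F : D₀, (inner ℂ (A F + B F) (F : H) : ℂ).re ≤ 0) ∧
      Dense (Set.range fun F : D₀ => (F : H) - (A F + B F)) := by
  have hA : A.IsDissipative := hnonpos
  have hAB : (A + B).IsDissipative := hA.add_of_skew hanti
  refine ⟨hAB, ?_⟩
  obtain ⟨C, hC⟩ := hkato (1 / 4) (by norm_num)
  set μ : ℝ := 4 * max C 0 + 1 with hμ_def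
  have hμ : 0 < μ := by positivity
  have hCμ : 1 / 4 + max C 0 / μ < 1 := by
    rw [← lt_sub_iff_add_lt', div_lt_iff₀ hμ, hμ_def]
    linarith [le_max_right C 0]
  have hA₁ : Dense (Set.range (((1 : ℝ) : ℂ) • D₀.subtype - A)) := by
    convert hesa using 2
    funext F
    simp
  have hABμ : DenseRange ((μ : ℂ) • D₀.subtype - (A + B)) :=
    hA.denseRange_add_of_norm_le (a := 1 / 4) (by norm_num) (le_max_right C 0) hμ hCμ
      (fun F => (hC F).trans (by gcongr; exact le_max_left C 0))
      (hA.denseRange_of_denseRange one_pos hμ hA₁)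
  have hAB₁ : Dense (Set.range (((1 : ℝ) : ℂ) • D₀.subtype - (A + B))) :=
    hAB.denseRange_of_denseRange hμ one_pos hABμ
  convert hAB₁ using 2
  funext F
  simp

/-- Perturbation lemma: let `A` be a symmetric nonpositive essentially self-adjoint operator
on a dense domain `D₀` (essential self-adjointness of the nonpositive symmetric `A` being
expressed by density of the range of `1 - A`), and let `B` be antisymmetric on `D₀` and
Kato-bounded by `A` with relative bound `0`. Then `A + B` is essentially m-dissipative on
`D₀`, i.e. `A + B` is dissipative and `Range(1 - (A+B))` is dense. -/
theorem stmt_7 {H : Type*} [NormedAddCommGroup H] [InnerProductSpace ℂ H]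
    [CompleteSpace H]
    (D₀ : Submodule ℂ H) (hdense : Dense (D₀ : Set H))
    (A B : D₀ →ₗ[ℂ] H)
    (hsymm : ∀ F G : D₀, (inner ℂ (A F) (G : H) : ℂ) = inner ℂ (F : H) (A G))
    (hnonpos : ∀ F : D₀, (inner ℂ (A F) (F : H) : ℂ).re ≤ 0)
    (hesa : Dense (Set.range fun F : D₀ => (F : H) - A F))
    (hanti : ∀ F G : D₀, (inner ℂ (B F) (G : H) : ℂ) = -inner ℂ (F : H) (B G))
    (hkato : ∀ ε : ℝ, 0 < ε → ∃ Cε : ℝ, ∀ F : D₀, ‖B F‖ ≤ ε * ‖A F‖ + Cε * ‖(F : H)‖) :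
    (∀ F : D₀, (inner ℂ (A F + B F) (F : H) : ℂ).re ≤ 0) ∧
      Dense (Set.range fun F : D₀ => (F : H) - (A F + B F)) :=
  stmt_7_general D₀ A B hnonpos hesa hanti hkato
end
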